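/- Let K be a finite simplicial complex canonically embedded in ℝ^d whose support lies in the r-offset of a compact C² hypersurface M with r < reach(M). Suppose K has a non-vertical skeleton relative to M (no vertical i-simplices for 0 < i < d) and K is vertically convex relative to M. If the dual graph G_M(K) on d-simplices (with an arc σ₀ → σ₁ whenever σ₀ and σ₁ share a facet that is an upper facet of σ₀ and a lower facet of σ₁) is empty, then the lower skin of |K| equals the upper skin of |K|. -/
import Mathlib


noncomputable section

open Metric Set

/-- The medial axis of a set: points with at least two nearest points on the set. -/
def medialAxis {d : ℕ} (M : Set (EuclideanSpace ℝ (Fin d))) : Set (EuclideanSpace ℝ (Fin d)) :=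
  {x | ∃ y ∈ M, ∃ z ∈ M, y ≠ z ∧ dist x y = infDist x M ∧ dist x z = infDist x M}

/-- Local feature size: distance to the medial axis. -/
def lfs {d : ℕ} (M : Set (EuclideanSpace ℝ (Fin d))) (a : EuclideanSpace ℝ (Fin d)) : ℝ :=
  infDist a (medialAxis M)

/-- Angle between two linear subspaces: sup over unit u ∈ U of inf over unit v ∈ V of ∠(u,v). -/
def subAngle {d : ℕ} (U V : Submodule ℝ (EuclideanSpace ℝ (Fin d))) : ℝ :=
  ⨆ u : {x : EuclideanSpace ℝ (Fin d) // x ∈ U ∧ ‖x‖ = 1},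
    ⨅ v : {y : EuclideanSpace ℝ (Fin d) // y ∈ V ∧ ‖y‖ = 1},
      InnerProductGeometry.angle u.1 v.1

open RealInnerProductSpace

/-- The upper skin of a set `X`: points of `X` that are highest, along the normal
direction `n (πM x)`, within their fiber of the projection `πM` restricted to `X`. -/
def upperSkin {d : ℕ} (πM n : EuclideanSpace ℝ (Fin d) → EuclideanSpace ℝ (Fin d))
    (X : Set (EuclideanSpace ℝ (Fin d))) : Set (EuclideanSpace ℝ (Fin d)) :=
  {x | x ∈ X ∧ ∀ y ∈ X, πM y = πM x → ⟪y - x, n (πM x)⟫ ≤ 0}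

/-- The lower skin of a set `X`: points of `X` that are lowest, along the normal
direction `n (πM x)`, within their fiber of the projection `πM` restricted to `X`. -/
def lowerSkin {d : ℕ} (πM n : EuclideanSpace ℝ (Fin d) → EuclideanSpace ℝ (Fin d))
    (X : Set (EuclideanSpace ℝ (Fin d))) : Set (EuclideanSpace ℝ (Fin d)) :=
  {x | x ∈ X ∧ ∀ y ∈ X, πM y = πM x → 0 ≤ ⟪y - x, n (πM x)⟫}

theorem stmt19 {d : ℕ} (hd : 0 < d)
    (M : Set (EuclideanSpace ℝ (Fin d))) (hMc : IsCompact M)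
    (R r : ℝ) (hR : 0 < R) (hr : 0 ≤ r) (hrR : r < R)
    (hreach : ∀ x ∈ M, ∀ y ∈ medialAxis M, R ≤ dist x y)
    (T : EuclideanSpace ℝ (Fin d) → Submodule ℝ (EuclideanSpace ℝ (Fin d)))
    (hT : ∀ a ∈ M, (T a : Set (EuclideanSpace ℝ (Fin d))) = tangentConeAt ℝ M a)
    (hcodim : ∀ a ∈ M, Module.finrank ℝ (T a) = d - 1)
    (πM : EuclideanSpace ℝ (Fin d) → EuclideanSpace ℝ (Fin d))
    (hπ : ∀ x ∉ medialAxis M, πM x ∈ M ∧ dist x (πM x) = Metric.infDist x M)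
    (n : EuclideanSpace ℝ (Fin d) → EuclideanSpace ℝ (Fin d))
    (hn : ∀ m ∈ M, ‖n m‖ = 1 ∧ n m ∈ (T m)ᗮ)
    -- `K` is a finite simplicial complex, canonically embedded:
    (K : Finset (Finset (EuclideanSpace ℝ (Fin d))))
    (hne : ∀ σ ∈ K, σ.Nonempty)
    (hdc : ∀ σ ∈ K, ∀ τ ⊆ σ, τ.Nonempty → τ ∈ K)
    (hindep : ∀ σ ∈ K, AffineIndependent ℝ
      (fun x : {x // x ∈ σ} => (x : EuclideanSpace ℝ (Fin d))))
    (hemb : ∀ σ ∈ K, ∀ τ ∈ K,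
      convexHull ℝ ((↑σ ∩ ↑τ : Set (EuclideanSpace ℝ (Fin d)))) =
        convexHull ℝ (↑σ : Set (EuclideanSpace ℝ (Fin d))) ∩
          convexHull ℝ (↑τ : Set (EuclideanSpace ℝ (Fin d))))
    -- support of K, contained in the r-offset of M:
    (supp : Set (EuclideanSpace ℝ (Fin d)))
    (hsupp : supp = ⋃ σ ∈ K, convexHull ℝ (↑σ : Set (EuclideanSpace ℝ (Fin d))))
    (hoff : supp ⊆ Metric.cthickening r M)
    -- non-vertical skeleton: no vertical i-simplices for 0 < i < d:
    (hskel : ∀ σ ∈ K, 1 < σ.card → σ.card < d + 1 →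
      ¬ ∃ x ∈ convexHull ℝ (↑σ : Set (EuclideanSpace ℝ (Fin d))),
          ∃ y ∈ convexHull ℝ (↑σ : Set (EuclideanSpace ℝ (Fin d))), x ≠ y ∧ πM x = πM y)
    -- vertical convexity: each normal fiber meets the support in a convex set:
    (hvc : ∀ m ∈ M, Convex ℝ {x | x ∈ supp ∧ πM x = m})
    -- the dual graph on d-simplices is empty, i.e. K has no d-simplices:
    (hnod : ∀ σ ∈ K, σ.card ≠ d + 1) :
    lowerSkin πM n supp = upperSkin πM n supp := by

  -- Every point of the support is outside the medial axis.
  have hnotma : ∀ z ∈ supp, z ∉ medialAxis M := by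
    intro z hz hzma
    obtain ⟨a, haM, -⟩ := id hzma
    have hle : infDist z M ≤ r := by
      have h := Metric.mem_cthickening_iff.1 (hoff hz)
      have h2 := ENNReal.toReal_mono ENNReal.ofReal_ne_top h
      rwa [ENNReal.toReal_ofReal hr] at h2
    obtain ⟨b, hbM, hb⟩ := (Metric.infDist_lt_iff ⟨a, haM⟩).1 (lt_of_le_of_lt hle hrR)
    have := hreach b hbM z hzma
    rw [dist_comm] at this
    linarith
  -- Key claim: the fibers of πM over the support are singletons.
  have key : ∀ x ∈ supp, ∀ y ∈ supp, πM y = πM x → y = x := by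
    intro x hx y hy hxy
    by_contra hyx
    have hxny : x ≠ y := fun h => hyx h.symm
    have hm : πM x ∈ M := (hπ x (hnotma x hx)).1
    have hF : Convex ℝ {z | z ∈ supp ∧ πM z = πM x} := hvc (πM x) hm
    have hxF : x ∈ {z | z ∈ supp ∧ πM z = πM x} := ⟨hx, rfl⟩
    have hyF : y ∈ {z | z ∈ supp ∧ πM z = πM x} := ⟨hy, hxy⟩
    have hseg : segment ℝ x y ⊆ {z | z ∈ supp ∧ πM z = πM x} :=
      hF.segment_subset hxF hyF
    -- points on the segment
    have hgm : ∀ t : Set.Icc (0:ℝ) 1,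
        AffineMap.lineMap x y (t:ℝ) ∈ {z | z ∈ supp ∧ πM z = πM x} := by
      intro t
      apply hseg
      rw [segment_eq_image_lineMap]
      exact ⟨t, t.2, rfl⟩
    -- choose a simplex containing each point of the segment
    have hch : ∀ t : Set.Icc (0:ℝ) 1, ∃ σ : {σ // σ ∈ K},
        AffineMap.lineMap x y (t:ℝ) ∈
          convexHull ℝ ((σ.1 : Set (EuclideanSpace ℝ (Fin d)))) := by
      intro t
      have hmem : AffineMap.lineMap x y (t:ℝ) ∈ supp := (hgm t).1
      rw [hsupp] at hmem
      obtain ⟨σ, hσ, hmem⟩ := Set.mem_iUnion₂.1 hmem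
      exact ⟨⟨σ, hσ⟩, hmem⟩
    choose f hf using hch
    haveI : Infinite (Set.Icc (0:ℝ) 1) := Set.Icc.infinite (by norm_num)
    obtain ⟨s, t, hst, hfst⟩ := Finite.exists_ne_map_eq_of_infinite f
    set σ := f s with hσdef
    have hσK : σ.1 ∈ K := σ.2
    set p := AffineMap.lineMap x y (s:ℝ) with hpdef
    set q := AffineMap.lineMap x y (t:ℝ) with hqdef
    have hp : p ∈ convexHull ℝ ((σ.1 : Set (EuclideanSpace ℝ (Fin d)))) := hf s
    have hq : q ∈ convexHull ℝ ((σ.1 : Set (EuclideanSpace ℝ (Fin d)))) := by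
      rw [hfst]; exact hf t
    have hpq : p ≠ q := by
      intro h
      exact hst (Subtype.ext (AffineMap.lineMap_injective ℝ hxny h))
    have hπpq : πM p = πM q := by
      rw [(hgm s).2, (hgm t).2]
    -- cardinality bounds
    have hcard1 : 1 ≤ σ.1.card := Finset.card_pos.2 (hne σ.1 hσK)
    have hcard_le : σ.1.card ≤ d + 1 := by
      have h1 := (hindep σ.1 hσK).card_le_finrank_succ
      rw [Fintype.card_coe] at h1
      have h2 : Module.finrank ℝ
          (vectorSpan ℝ (Set.range fun x : {x // x ∈ σ.1} =>
            (x : EuclideanSpace ℝ (Fin d)))) ≤ d := by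
        have := Submodule.finrank_le
          (vectorSpan ℝ (Set.range fun x : {x // x ∈ σ.1} =>
            (x : EuclideanSpace ℝ (Fin d))))
        rwa [finrank_euclideanSpace_fin] at this
      omega
    rcases eq_or_lt_of_le hcard1 with h1 | h1
    · -- a vertex: its hull is a singleton
      obtain ⟨v, hv⟩ := Finset.card_eq_one.1 h1.symm
      rw [hv] at hp hq
      simp only [Finset.coe_singleton, convexHull_singleton, Set.mem_singleton_iff] at hp hq
      exact hpq (hp.trans hq.symm)
    · have h2 : σ.1.card < d + 1 := lt_of_le_of_ne hcard_le (hnod σ.1 hσK)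
      exact hskel σ.1 hσK h1 h2 ⟨p, hp, q, hq, hpq, hπpq⟩
  -- conclude: both skins equal the support
  ext z
  constructor
  · rintro ⟨hz, -⟩
    refine ⟨hz, fun y hy hπy => ?_⟩
    rw [key z hz y hy hπy]
    simp
  · rintro ⟨hz, -⟩
    refine ⟨hz, fun y hy hπy => ?_⟩
    rw [key z hz y hy hπy]
    simp
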